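/- Let 𝒜 be an arrangement of n ≥ 2 pairwise non-proportional linear forms with rank-2 flats X₁,...,X_r of sizes n_u = |𝒜_{X_u}| ≥ 2. If Σ_{u=1}^r C(n_u−1, 2) = C(n−1, 2), then rank(𝒜) = 2 (equivalently r = 1 and n₁ = n). -/

import Mathlib

/-!
The rank-2 flats form a linear space on the `n` forms: two distinct forms span exactly one flat.
Counting pairs gives `Σ C(n_u, 2) = C(n, 2)`, and by Pascal's rule the hypothesis turns this into
`Σ (n_u - 1) = n - 1`. The flats through any fixed form already contribute `n - 1` to that sum,
so every flat contains every form: there is a single flat, and all forms lie in the span of two.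
-/

open MvPolynomial Finset Classical

noncomputable section

/-- The rank-2 flats of the arrangement defined by `ℓ`, encoded by the sets
`𝒜_X = {u | ℓ_u ∈ span(ℓᵢ, ℓⱼ)}` for pairs `i ≠ j`. -/
noncomputable def rank2Flats {K : Type*} [Field K] {k n : ℕ}
    (ℓ : Fin n → MvPolynomial (Fin k) K) : Finset (Finset (Fin n)) :=
  Finset.image
    (fun p : Fin n × Fin n =>
      Finset.univ.filter (fun u => ℓ u ∈ Submodule.span K {ℓ p.1, ℓ p.2}))
    (Finset.univ.filter (fun p : Fin n × Fin n => p.1 ≠ p.2))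

theorem Nat.choose_two_eq_pred_choose_two_add_pred (m : ℕ) :
    m.choose 2 = (m - 1).choose 2 + (m - 1) := by
  rcases m with _ | m
  · rfl
  · simp [Nat.choose_succ_succ, add_comm]

/-- A linear space in the sense of incidence geometry, the members of `𝓛` being its lines. -/
structure IsLinearSpace {α : Type*} (𝓛 : Finset (Finset α)) : Prop where
  exists_mem : ∀ ⦃i j : α⦄, i ≠ j → ∃ S ∈ 𝓛, i ∈ S ∧ j ∈ S
  eq_of_mem : ∀ ⦃S T : Finset α⦄, S ∈ 𝓛 → T ∈ 𝓛 → ∀ ⦃i j : α⦄, i ≠ j →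
    i ∈ S → j ∈ S → i ∈ T → j ∈ T → S = T
  two_le_card : ∀ ⦃S : Finset α⦄, S ∈ 𝓛 → 2 ≤ #S

namespace IsLinearSpace

variable {α : Type*} [Fintype α] {𝓛 : Finset (Finset α)}

theorem sum_card_choose_two (h : IsLinearSpace 𝓛) :
    ∑ S ∈ 𝓛, (#S).choose 2 = (Fintype.card α).choose 2 := by
  have hdisj : (𝓛 : Set (Finset α)).PairwiseDisjoint (powersetCard 2) := by
    intro S hS T hT hST
    refine disjoint_left.mpr fun p hpS hpT => hST ?_
    rw [mem_powersetCard] at hpS hpT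
    obtain ⟨i, j, hij, rfl⟩ := card_eq_two.mp hpS.2
    exact h.eq_of_mem hS hT hij (hpS.1 (by simp)) (hpS.1 (by simp)) (hpT.1 (by simp))
      (hpT.1 (by simp))
  have hcover : 𝓛.biUnion (powersetCard 2) = powersetCard 2 univ := by
    ext p
    simp only [mem_biUnion, mem_powersetCard, subset_univ, true_and]
    refine ⟨fun ⟨_, _, _, hp⟩ => hp, fun hp => ?_⟩
    obtain ⟨i, j, hij, rfl⟩ := card_eq_two.mp hp
    obtain ⟨S, hS, hi, hj⟩ := h.exists_mem hij
    exact ⟨S, hS, by simp [insert_subset_iff, hi, hj], hp⟩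
  rw [← card_univ, ← card_powersetCard, ← hcover, card_biUnion hdisj]
  simp only [card_powersetCard]

theorem sum_filter_mem_card_sub_one (h : IsLinearSpace 𝓛) (m : α) :
    ∑ S ∈ 𝓛 with m ∈ S, (#S - 1) = Fintype.card α - 1 := by
  have hdisj : ((𝓛.filter (m ∈ ·) : Finset _) : Set (Finset α)).PairwiseDisjoint
      (·.erase m) := by
    intro S hS T hT hST
    simp only [coe_filter, Set.mem_ofPred_eq] at hS hT
    refine disjoint_left.mpr fun j hjS hjT => hST ?_
    rw [mem_erase] at hjS hjT
    exact h.eq_of_mem hS.1 hT.1 hjS.1.symm hS.2 hjS.2 hT.2 hjT.2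
  have hcover : (𝓛.filter (m ∈ ·)).biUnion (·.erase m) = univ.erase m := by
    ext j
    simp only [mem_biUnion, mem_filter, mem_erase, mem_univ, and_true]
    refine ⟨fun ⟨_, _, hjm, _⟩ => hjm, fun hjm => ?_⟩
    obtain ⟨S, hS, hm, hj⟩ := h.exists_mem (Ne.symm hjm)
    exact ⟨S, ⟨hS, hm⟩, hjm, hj⟩
  rw [← card_univ, ← card_erase_of_mem (mem_univ m), ← hcover, card_biUnion hdisj]
  exact sum_congr rfl fun S hS => (card_erase_of_mem (mem_filter.mp hS).2).symm

theorem sum_card_sub_one_of_sum_choose (h : IsLinearSpace 𝓛)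
    (hsum : ∑ S ∈ 𝓛, (#S - 1).choose 2 = (Fintype.card α - 1).choose 2) :
    ∑ S ∈ 𝓛, (#S - 1) = Fintype.card α - 1 := by
  have hpairs := h.sum_card_choose_two
  simp only [Nat.choose_two_eq_pred_choose_two_add_pred (#_),
    Nat.choose_two_eq_pred_choose_two_add_pred (Fintype.card α), sum_add_distrib, hsum] at hpairs
  omega

theorem eq_univ_of_sum_card_sub_one (h : IsLinearSpace 𝓛)
    (hsum : ∑ S ∈ 𝓛, (#S - 1) = Fintype.card α - 1) {S : Finset α} (hS : S ∈ 𝓛) :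
    S = univ := by
  refine eq_univ_of_forall fun m => by_contra fun hm => ?_
  have hsplit := sum_filter_add_sum_filter_not 𝓛 (m ∈ ·) (fun S => #S - 1)
  rw [h.sum_filter_mem_card_sub_one m, hsum] at hsplit
  have hS_le : #S - 1 ≤ ∑ T ∈ 𝓛 with m ∉ T, (#T - 1) :=
    single_le_sum (f := fun T => #T - 1) (fun _ _ => Nat.zero_le _) (mem_filter.mpr ⟨hS, hm⟩)
  have := h.two_le_card hS
  omega

theorem eq_singleton_univ_of_sum_choose (h : IsLinearSpace 𝓛) (hα : 1 < Fintype.card α)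
    (hsum : ∑ S ∈ 𝓛, (#S - 1).choose 2 = (Fintype.card α - 1).choose 2) :
    𝓛 = {univ} := by
  have huniv : ∀ S ∈ 𝓛, S = univ := fun _ =>
    h.eq_univ_of_sum_card_sub_one (h.sum_card_sub_one_of_sum_choose hsum)
  obtain ⟨i, j, hij⟩ := Fintype.exists_pair_of_one_lt_card hα
  obtain ⟨S, hS, -⟩ := h.exists_mem hij
  exact eq_singleton_iff_unique_mem.mpr ⟨huniv S hS ▸ hS, huniv⟩

end IsLinearSpace

section SpanPair

variable {K V : Type*} [Field K] [AddCommGroup V] [Module K V]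

theorem finrank_span_pair_of_linearIndependent {x y : V} (h : LinearIndependent K ![x, y]) :
    Module.finrank K (Submodule.span K {x, y}) = 2 := by
  have := finrank_span_eq_card h
  rwa [Matrix.range_cons_cons_empty, Fintype.card_fin] at this

theorem span_pair_eq_of_linearIndependent_of_mem {x y u v : V}
    (hxy : LinearIndependent K ![x, y]) (huv : LinearIndependent K ![u, v])
    (hu : u ∈ Submodule.span K {x, y}) (hv : v ∈ Submodule.span K {x, y}) :
    Submodule.span K {u, v} = Submodule.span K {x, y} := by
  have : FiniteDimensional K (Submodule.span K {x, y}) :=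
    FiniteDimensional.span_of_finite K (Set.toFinite _)
  refine Submodule.eq_of_le_of_finrank_le ?_ ?_
  · rw [Submodule.span_le]
    rintro w (rfl | rfl)
    exacts [hu, hv]
  · rw [finrank_span_pair_of_linearIndependent hxy, finrank_span_pair_of_linearIndependent huv]

theorem linearIndependent_pair_of_ne {ι : Type*} {ℓ : ι → V} (hne : ∀ i, ℓ i ≠ 0)
    (hprop : ∀ i j, i ≠ j → ∀ c : K, ℓ i ≠ c • ℓ j) {i j : ι} (hij : i ≠ j) :
    LinearIndependent K ![ℓ i, ℓ j] :=
  linearIndependent_fin2.mpr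
    ⟨by simpa using hne j, fun c h => by simpa using hprop i j hij c h.symm⟩

end SpanPair

section Rank2Flats

variable {K : Type*} [Field K] {k n : ℕ} {ℓ : Fin n → MvPolynomial (Fin k) K}

def rank2Flat (ℓ : Fin n → MvPolynomial (Fin k) K) (i j : Fin n) : Finset (Fin n) :=
  univ.filter fun u => ℓ u ∈ Submodule.span K {ℓ i, ℓ j}

@[simp]
theorem mem_rank2Flat {i j u : Fin n} :
    u ∈ rank2Flat ℓ i j ↔ ℓ u ∈ Submodule.span K {ℓ i, ℓ j} := by
  simp [rank2Flat]

theorem mem_rank2Flats {S : Finset (Fin n)} :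
    S ∈ rank2Flats ℓ ↔ ∃ i j, i ≠ j ∧ rank2Flat ℓ i j = S := by
  simp [rank2Flats, rank2Flat]

theorem left_mem_rank2Flat (i j : Fin n) : i ∈ rank2Flat ℓ i j :=
  mem_rank2Flat.mpr (Submodule.subset_span (Set.mem_insert _ _))

theorem right_mem_rank2Flat (i j : Fin n) : j ∈ rank2Flat ℓ i j :=
  mem_rank2Flat.mpr (Submodule.subset_span (Set.mem_insert_of_mem _ rfl))

theorem isLinearSpace_rank2Flats (hne : ∀ i, ℓ i ≠ 0)
    (hprop : ∀ i j : Fin n, i ≠ j → ∀ c : K, ℓ i ≠ c • ℓ j) :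
    IsLinearSpace (rank2Flats ℓ) where
  exists_mem i j hij :=
    ⟨rank2Flat ℓ i j, mem_rank2Flats.mpr ⟨i, j, hij, rfl⟩, left_mem_rank2Flat i j,
      right_mem_rank2Flat i j⟩
  eq_of_mem S T hS hT i j hij hiS hjS hiT hjT := by
    obtain ⟨a, b, hab, rfl⟩ := mem_rank2Flats.mp hS
    obtain ⟨c, d, hcd, rfl⟩ := mem_rank2Flats.mp hT
    have hij' := linearIndependent_pair_of_ne hne hprop hij
    ext u
    simp only [mem_rank2Flat] at *
    rw [← span_pair_eq_of_linearIndependent_of_mem (linearIndependent_pair_of_ne hne hprop hab)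
        hij' hiS hjS,
      ← span_pair_eq_of_linearIndependent_of_mem (linearIndependent_pair_of_ne hne hprop hcd)
        hij' hiT hjT]
  two_le_card S hS := by
    obtain ⟨i, j, hij, rfl⟩ := mem_rank2Flats.mp hS
    exact one_lt_card.mpr ⟨i, left_mem_rank2Flat i j, j, right_mem_rank2Flat i j, hij⟩

theorem span_range_eq_of_rank2Flat_eq_univ {i j : Fin n} (h : rank2Flat ℓ i j = univ) :
    Submodule.span K (Set.range ℓ) = Submodule.span K {ℓ i, ℓ j} := by
  refine le_antisymm (Submodule.span_le.mpr ?_) (Submodule.span_mono ?_)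
  · rintro _ ⟨u, rfl⟩
    exact mem_rank2Flat.mp (h ▸ mem_univ u)
  · rintro _ (rfl | rfl) <;> exact ⟨_, rfl⟩

end Rank2Flats

theorem stmt10_general {K : Type*} [Field K] {k n : ℕ} (hn : 2 ≤ n)
    (ℓ : Fin n → MvPolynomial (Fin k) K)
    (hne : ∀ i, ℓ i ≠ 0)
    (hprop : ∀ i j : Fin n, i ≠ j → ∀ c : K, ℓ i ≠ c • ℓ j)
    (hsum : ∑ S ∈ rank2Flats ℓ, (S.card - 1).choose 2 = (n - 1).choose 2) :
    Module.finrank K (Submodule.span K (Set.range ℓ)) = 2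
    ∧ (rank2Flats ℓ).card = 1 ∧ ∀ S ∈ rank2Flats ℓ, S.card = n := by
  have hcard : 1 < Fintype.card (Fin n) := by rw [Fintype.card_fin]; exact hn
  have hflats : rank2Flats ℓ = {univ} :=
    (isLinearSpace_rank2Flats hne hprop).eq_singleton_univ_of_sum_choose hcard
      (by simpa using hsum)
  obtain ⟨i, j, hij⟩ := Fintype.exists_pair_of_one_lt_card hcard
  have hflat : rank2Flat ℓ i j = univ := by
    simpa [hflats] using (mem_rank2Flats (ℓ := ℓ)).mpr ⟨i, j, hij, rfl⟩
  refine ⟨?_, by simp [hflats], by simp [hflats]⟩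
  rw [span_range_eq_of_rank2Flat_eq_univ hflat]
  exact finrank_span_pair_of_linearIndependent (linearIndependent_pair_of_ne hne hprop hij)

/-- For an arrangement of `n ≥ 2` pairwise non-proportional linear forms with rank-2 flats
`X₁,...,X_r` of sizes `n_u`, if `Σ_u C(n_u−1,2) = C(n−1,2)` then the arrangement has rank 2
(equivalently, `r = 1` and `n₁ = n`). -/
theorem stmt10 {K : Type*} [Field K] [CharZero K] {k n : ℕ} (hn : 2 ≤ n)
    (ℓ : Fin n → MvPolynomial (Fin k) K)
    (hhom : ∀ i, (ℓ i).IsHomogeneous 1)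
    (hne : ∀ i, ℓ i ≠ 0)
    (hprop : ∀ i j : Fin n, i ≠ j → ∀ c : K, ℓ i ≠ c • ℓ j)
    (hsum : ∑ S ∈ rank2Flats ℓ, (S.card - 1).choose 2 = (n - 1).choose 2) :
    Module.finrank K (Submodule.span K (Set.range ℓ)) = 2
    ∧ (rank2Flats ℓ).card = 1 ∧ ∀ S ∈ rank2Flats ℓ, S.card = n :=
  stmt10_general hn ℓ hne hprop hsum

end
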